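/- arXiv:2501.01858 — 2 statements merged into one kernel-verified Lean document; each statement's English description precedes it below -/
import Mathlib

section
/- Let zeta in C^d satisfy zeta · zeta = 0, let omega in C^d, let A be a symmetric k-tensor on C^d, let I_2 denote the identity 2-tensor with components delta_{jk}, and let n >= 1 and 0 <= j < n. Then the full contraction (A ⊗ I_2^n) · (zeta^{k+2n-j} ⊗ omega^j) = 0. -/
open scoped BigOperators

/-- A symmetric tensor: invariant under permutation of index entries. -/
def IsSymTensor (d k : ℕ) (A : (Fin k → Fin d) → ℂ) : Prop :=
  ∀ (π : Equiv.Perm (Fin k)) (α : Fin k → Fin d), A (α ∘ π) = A α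

/-- Symmetrization of an array. -/
noncomputable def symmetrize (d k : ℕ) (A : (Fin k → Fin d) → ℂ) : (Fin k → Fin d) → ℂ :=
  fun α => ((Nat.factorial k : ℂ))⁻¹ * ∑ π : Equiv.Perm (Fin k), A (α ∘ π)

/-- Full contraction (bilinear dot product) of two k-tensors. -/
noncomputable def tdot (d k : ℕ) (A B : (Fin k → Fin d) → ℂ) : ℂ :=
  ∑ α : Fin k → Fin d, A α * B α

/-- Partial contraction: A of order m+j contracted with B of order j. -/
noncomputable def contr (d m j : ℕ) (A : (Fin (m + j) → Fin d) → ℂ)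
    (B : (Fin j → Fin d) → ℂ) : (Fin m → Fin d) → ℂ :=
  fun α => ∑ β : Fin j → Fin d, A (Fin.append α β) * B β

/-- Symmetric tensor product. -/
noncomputable def stprod (d j k : ℕ) (A : (Fin j → Fin d) → ℂ) (B : (Fin k → Fin d) → ℂ) :
    (Fin (j + k) → Fin d) → ℂ :=
  symmetrize d (j + k)
    (fun α => A (fun i => α (Fin.castAdd k i)) * B (fun i => α (Fin.natAdd j i)))

/-- Reindexing a tensor along an equality of orders. -/
def tcast (d : ℕ) {a b : ℕ} (h : a = b) (A : (Fin a → Fin d) → ℂ) : (Fin b → Fin d) → ℂ :=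
  fun α => A (α ∘ Fin.cast h)

/-- m-fold symmetric tensor power of a vector. -/
noncomputable def vpow (d m : ℕ) (v : Fin d → ℂ) : (Fin m → Fin d) → ℂ :=
  fun α => ∏ i, v (α i)

/-- Symmetric tensor product of a family of s vectors. -/
noncomputable def symProdFam (d s : ℕ) (v : Fin s → (Fin d → ℂ)) : (Fin s → Fin d) → ℂ :=
  symmetrize d s (fun α => ∏ i, v i (α i))

/-- The identity 2-tensor. -/
noncomputable def I2 (d : ℕ) : (Fin 2 → Fin d) → ℂ := fun α => if α 0 = α 1 then 1 else 0

/-- n-fold symmetric tensor power of the identity 2-tensor. -/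
noncomputable def I2pow (d n : ℕ) : (Fin (n * 2) → Fin d) → ℂ :=
  symmetrize d (n * 2) (fun α => ∏ i : Fin n,
    if α (finProdFinEquiv (i, (0 : Fin 2))) = α (finProdFinEquiv (i, (1 : Fin 2))) then 1 else 0)

/-- Membership in the set V: real and imaginary parts orthonormal. -/
def memV (d : ℕ) (ζ : Fin d → ℂ) : Prop :=
  (∑ j, (ζ j).re * (ζ j).im) = 0 ∧ (∑ j, (ζ j).re ^ 2) = 1 ∧ (∑ j, (ζ j).im ^ 2) = 1

/-!
Expanding both symmetrizations, the contraction becomes an average of contractions of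
`A ⊗ δ_{α₁α₂} ⋯ δ_{α₂ₙ₋₁α₂ₙ}` against pure tensors `v₁ ⊗ ⋯ ⊗ v_{k+2n}` in which at most `j` of
the factors differ from `ζ`. Each such contraction factors through the `n` bilinear products
`v_{2p-1} · v_{2p}` of the paired slots, and since `j < n`, pigeonhole gives a pair with both
factors equal to `ζ`, whose product `ζ · ζ` vanishes.
-/

open Finset

noncomputable def pureTensor (d m : ℕ) (v : Fin m → Fin d → ℂ) : (Fin m → Fin d) → ℂ :=
  fun α => ∏ i, v i (α i)

section PureTensor

variable {d m : ℕ}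

lemma pureTensor_comp_perm (v : Fin m → Fin d → ℂ) (π : Equiv.Perm (Fin m)) (α : Fin m → Fin d) :
    pureTensor d m v (α ∘ π) = pureTensor d m (v ∘ π.symm) α :=
  Fintype.prod_equiv π _ _ fun i => by simp

lemma vpow_eq_pureTensor (v : Fin d → ℂ) : vpow d m v = pureTensor d m fun _ => v := rfl

lemma stprod_pureTensor {a b : ℕ} (u : Fin a → Fin d → ℂ) (v : Fin b → Fin d → ℂ) :
    stprod d a b (pureTensor d a u) (pureTensor d b v)
      = symmetrize d (a + b) (pureTensor d (a + b) (Fin.append u v)) := by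
  unfold stprod
  congr 1
  funext α
  simp [pureTensor, Fin.prod_univ_add]

lemma symmetrize_pureTensor (v : Fin m → Fin d → ℂ) :
    symmetrize d m (pureTensor d m v)
      = fun α => (m.factorial : ℂ)⁻¹ * ∑ π : Equiv.Perm (Fin m), pureTensor d m (v ∘ π.symm) α := by
  funext α
  simp only [symmetrize, pureTensor_comp_perm]

lemma tcast_symmetrize_pureTensor {a b : ℕ} (h : a = b) (v : Fin a → Fin d → ℂ) :
    tcast d h (symmetrize d a (pureTensor d a v))
      = fun α => (a.factorial : ℂ)⁻¹ *
          ∑ π : Equiv.Perm (Fin a), pureTensor d b (v ∘ π.symm ∘ Fin.cast h.symm) α := by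
  subst h
  exact symmetrize_pureTensor v

end PureTensor

section Contraction

variable {d k : ℕ}

lemma tdot_comp_perm (A B : (Fin k → Fin d) → ℂ) (π : Equiv.Perm (Fin k)) :
    tdot d k (fun α => A (α ∘ π)) B = tdot d k A (fun α => B (α ∘ π.symm)) :=
  Fintype.sum_equiv (π.symm.arrowCongr (Equiv.refl _)) _ _ fun α => by
    simp [Equiv.arrowCongr, Function.comp_assoc]

lemma tdot_symmetrize_left (A B : (Fin k → Fin d) → ℂ) :
    tdot d k (symmetrize d k A) B
      = (k.factorial : ℂ)⁻¹ * ∑ π : Equiv.Perm (Fin k), tdot d k A (fun α => B (α ∘ π.symm)) := by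
  calc tdot d k (symmetrize d k A) B
      = (k.factorial : ℂ)⁻¹ * ∑ π : Equiv.Perm (Fin k), tdot d k (fun α => A (α ∘ π)) B := by
        simp only [tdot, symmetrize, mul_sum, sum_mul, mul_assoc]
        exact sum_comm
    _ = _ := by simp only [tdot_comp_perm]

lemma tdot_mul_sum_right {ι : Type*} [Fintype ι] (A : (Fin k → Fin d) → ℂ) (c : ℂ)
    (B : ι → (Fin k → Fin d) → ℂ) :
    tdot d k A (fun α => c * ∑ x, B x α) = c * ∑ x, tdot d k A (B x) := by
  simp only [tdot, mul_sum]
  rw [sum_comm]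
  exact sum_congr rfl fun _ _ => sum_congr rfl fun _ _ => by ring

end Contraction

section Counting

variable {β : Type*} [DecidableEq β]

lemma card_filter_comp_le_of_injective {ι κ : Type*} [Fintype ι] [Fintype κ] (v : κ → β) (c : β)
    {g : ι → κ} (hg : Function.Injective g) : #{i | v (g i) ≠ c} ≤ #{i | v i ≠ c} :=
  card_le_card_of_injOn g (fun i hi => by simpa using hi) hg.injOn

lemma card_filter_append_const_ne_le {a b : ℕ} (c : β) (u : Fin b → β) :
    #{i | Fin.append (fun _ : Fin a => c) u i ≠ c} ≤ b := by
  calc #{i | Fin.append (fun _ : Fin a => c) u i ≠ c}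
      ≤ #(univ.image (Fin.natAdd a : Fin b → Fin (a + b))) := by
        refine card_le_card fun i hi => ?_
        induction i using Fin.addCases <;> simp_all
    _ ≤ b := card_image_le.trans (by simp)

lemma exists_pair_eq_of_card_ne_lt {n : ℕ} (v : Fin (n * 2) → β) (c : β)
    (h : #{i | v i ≠ c} < n) :
    ∃ p : Fin n, v (finProdFinEquiv (p, 0)) = c ∧ v (finProdFinEquiv (p, 1)) = c := by
  obtain ⟨p, -, hp⟩ := exists_mem_notMem_of_card_lt_card
    (s := ({i | v i ≠ c} : Finset _).image fun i => (finProdFinEquiv.symm i).1) (t := univ)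
    (by simpa using card_image_le.trans_lt h)
  have hpair : ∀ s, v (finProdFinEquiv (p, s)) = c := fun s => by
    by_contra hs
    exact hp (mem_image.2 ⟨_, by simpa using hs, by simp⟩)
  exact ⟨p, hpair 0, hpair 1⟩

end Counting

section Vanishing

variable {d : ℕ}

lemma sum_fin_two_delta_mul (f g : Fin d → ℂ) :
    ∑ c : Fin 2 → Fin d, (if c 0 = c 1 then (1 : ℂ) else 0) * (f (c 0) * g (c 1))
      = ∑ x, f x * g x := by
  rw [← (finTwoArrowEquiv (Fin d)).symm.sum_comp, Fintype.sum_prod_type]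
  simp [ite_mul]

lemma tdot_pairDelta_pureTensor {n : ℕ} (v : Fin (n * 2) → Fin d → ℂ) :
    tdot d (n * 2) (fun α => ∏ p : Fin n,
        if α (finProdFinEquiv (p, 0)) = α (finProdFinEquiv (p, 1)) then 1 else 0)
      (pureTensor d (n * 2) v)
      = ∏ p : Fin n, ∑ x, v (finProdFinEquiv (p, 0)) x * v (finProdFinEquiv (p, 1)) x := by
  let e : (Fin n → Fin 2 → Fin d) ≃ (Fin (n * 2) → Fin d) :=
    (Equiv.curry _ _ _).symm.trans (finProdFinEquiv.arrowCongr (Equiv.refl _))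
  have he : ∀ β p s, e β (finProdFinEquiv (p, s)) = β p s := fun β p s => by
    simp [e, Equiv.arrowCongr]
  simp only [← sum_fin_two_delta_mul, Fintype.prod_sum, tdot, pureTensor]
  rw [← e.sum_comp]
  refine sum_congr rfl fun β _ => ?_
  rw [← finProdFinEquiv.prod_comp, Fintype.prod_prod_type, ← prod_mul_distrib]
  simp only [he, Fin.prod_univ_two]

lemma tdot_I2pow_pureTensor_eq_zero {n : ℕ} {ζ : Fin d → ℂ} (hζ : ∑ x, ζ x * ζ x = 0)
    (v : Fin (n * 2) → Fin d → ℂ) (hv : #{i | v i ≠ ζ} < n) :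
    tdot d (n * 2) (I2pow d n) (pureTensor d (n * 2) v) = 0 := by
  rw [I2pow, tdot_symmetrize_left]
  refine mul_eq_zero_of_right _ (sum_eq_zero fun π _ => ?_)
  simp only [pureTensor_comp_perm, Equiv.symm_symm]
  rw [tdot_pairDelta_pureTensor]
  obtain ⟨p, h0, h1⟩ := exists_pair_eq_of_card_ne_lt (v ∘ π) ζ
    ((card_filter_comp_le_of_injective v ζ π.injective).trans_lt hv)
  exact prod_eq_zero (mem_univ p) (by simp_all)

lemma tdot_mul_pureTensor {a b : ℕ} (A : (Fin a → Fin d) → ℂ) (B : (Fin b → Fin d) → ℂ)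
    (v : Fin (a + b) → Fin d → ℂ) :
    tdot d (a + b) (fun α => A (fun i => α (Fin.castAdd b i)) * B (fun i => α (Fin.natAdd a i)))
      (pureTensor d (a + b) v)
      = tdot d a A (pureTensor d a fun i => v (Fin.castAdd b i))
        * tdot d b B (pureTensor d b fun i => v (Fin.natAdd a i)) := by
  rw [tdot, ← (Fin.appendEquiv a b).sum_comp, Fintype.sum_prod_type, tdot, tdot, sum_mul_sum]
  refine sum_congr rfl fun α _ => sum_congr rfl fun β _ => ?_
  simp only [pureTensor, Fin.appendEquiv_apply, Fin.append_left, Fin.append_right,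
    Fin.prod_univ_add]
  ring

lemma tdot_stprod_I2pow_pureTensor_eq_zero {k n : ℕ} {ζ : Fin d → ℂ} (hζ : ∑ x, ζ x * ζ x = 0)
    (A : (Fin k → Fin d) → ℂ) (v : Fin (k + n * 2) → Fin d → ℂ) (hv : #{i | v i ≠ ζ} < n) :
    tdot d (k + n * 2) (stprod d k (n * 2) A (I2pow d n)) (pureTensor d (k + n * 2) v) = 0 := by
  rw [stprod, tdot_symmetrize_left]
  refine mul_eq_zero_of_right _ (sum_eq_zero fun π _ => ?_)
  simp only [pureTensor_comp_perm, Equiv.symm_symm]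
  rw [tdot_mul_pureTensor, tdot_I2pow_pureTensor_eq_zero hζ, mul_zero]
  exact (card_filter_comp_le_of_injective v ζ
    (π.injective.comp (Fin.natAdd_injective _ k))).trans_lt hv

end Vanishing

/-- (A ⊗ I₂ⁿ) · (ζ^{k+2n-j} ⊗ ω^j) = 0 for ζ·ζ = 0 and j < n. -/
theorem tprod_I2pow_contract_zero (d k n j : ℕ) (hj : j < n)
    (ζ ω : Fin d → ℂ) (hζ : (∑ i, ζ i * ζ i) = 0)
    (A : (Fin k → Fin d) → ℂ) :
    tdot d (k + n * 2) (stprod d k (n * 2) A (I2pow d n))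
      (tcast d (by omega : (k + 2 * n - j) + j = k + n * 2)
        (stprod d (k + 2 * n - j) j (vpow d (k + 2 * n - j) ζ) (vpow d j ω))) = 0 := by
  rw [vpow_eq_pureTensor, vpow_eq_pureTensor, stprod_pureTensor, tcast_symmetrize_pureTensor,
    tdot_mul_sum_right]
  refine mul_eq_zero_of_right _ (sum_eq_zero fun π _ =>
    tdot_stprod_I2pow_pureTensor_eq_zero hζ A _ ?_)
  calc #{i | (Fin.append (fun _ => ζ) (fun _ => ω) ∘ π.symm ∘ Fin.cast _) i ≠ ζ}
      ≤ #{i | Fin.append (fun _ : Fin (k + 2 * n - j) => ζ) (fun _ : Fin j => ω) i ≠ ζ} :=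
        card_filter_comp_le_of_injective _ ζ (π.symm.injective.comp (Fin.cast_injective _))
    _ ≤ j := card_filter_append_const_ne_le ζ _
    _ < n := hj
end

section
/- If A is a symmetric k-tensor on C^d with k >= 2 and d >= 3 such that A · zeta^k = 0 for every zeta in C^d with Re(zeta) · Im(zeta) = 0 and |Re(zeta)| = |Im(zeta)| = 1, then there exists a symmetric (k-2)-tensor B such that A = I_2 ⊗ B, where I_2 is the identity 2-tensor. -/
open scoped BigOperators

/-! A `k`-tensor `A` is encoded by the homogeneous polynomial `P_A = tensorPoly d k A`,
`ζ ↦ A · ζ^k`; a symmetric tensor is determined by `P_A`, and every homogeneous polynomial of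
degree `k` is some `P_A`. Every nonzero `ζ` with `ζ · ζ = 0` is a real multiple of a point of `V`,
so by homogeneity `P_A` vanishes on the whole cone `ζ · ζ = 0`. Viewing `P_A` as a polynomial in
`ζ₀` over the other variables and dividing by the monic `ζ₀² + c`, `c = ζ₁² + ⋯ + ζₙ²`, the
remainder `a ζ₀ + b` vanishes at both roots `±√(-c)`, so `a = b = 0`. Hence `ζ · ζ` divides
`P_A`, and the degree-`(k - 2)` part of the quotient is `P_B` for a symmetric `B`. -/

open MvPolynomial Finset

noncomputable def occurrences {d k : ℕ} (α : Fin k → Fin d) : Fin d →₀ ℕ :=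
  ∑ i, Finsupp.single (α i) 1

noncomputable def tensorPoly (d k : ℕ) : ((Fin k → Fin d) → ℂ) →ₗ[ℂ] MvPolynomial (Fin d) ℂ :=
  Fintype.linearCombination ℂ fun α => ∏ i, X (α i)

section Occurrences

variable {d k : ℕ}

lemma toMultiset_occurrences (α : Fin k → Fin d) :
    Finsupp.toMultiset (occurrences α) = Multiset.map α univ.val := by
  simp only [occurrences, map_sum, Finsupp.toMultiset_single, one_nsmul]
  rw [← Multiset.sum_map_singleton (Multiset.map α univ.val), Multiset.map_map]
  rfl

lemma degree_occurrences (α : Fin k → Fin d) : (occurrences α).degree = k := by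
  simp [occurrences, map_sum]

lemma exists_perm_of_occurrences_eq {β β' : Fin k → Fin d}
    (h : occurrences β = occurrences β') : ∃ π : Equiv.Perm (Fin k), β ∘ π = β' := by
  have hm := congrArg Finsupp.toMultiset h
  rw [toMultiset_occurrences, toMultiset_occurrences, Fin.univ_val_map, Fin.univ_val_map,
    Multiset.coe_eq_coe] at hm
  have hsort : β ∘ Tuple.sort β = β' ∘ Tuple.sort β' :=
    List.ofFn_injective <| List.Perm.eq_of_sortedLE
      (Tuple.monotone_sort β).sortedLE_ofFn (Tuple.monotone_sort β').sortedLE_ofFn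
      ((((Tuple.sort β).ofFn_comp_perm β).trans hm).trans ((Tuple.sort β').ofFn_comp_perm β').symm)
  refine ⟨Tuple.sort β * (Tuple.sort β')⁻¹, funext fun i => ?_⟩
  simpa using congrFun hsort ((Tuple.sort β')⁻¹ i)

lemma exists_occurrences_eq {μ : Fin d →₀ ℕ} (hμ : μ.degree = k) :
    ∃ β : Fin k → Fin d, occurrences β = μ := by
  have hlen : μ.toMultiset.toList.length = k := by
    rw [Multiset.length_toList, Finsupp.card_toMultiset, ← hμ, Finsupp.degree_eq_sum,
      Finsupp.sum_fintype] <;> simp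
  classical
  refine ⟨fun i => μ.toMultiset.toList.get (Fin.cast hlen.symm i), ?_⟩
  refine (Finsupp.toMultiset_eq_iff.mp ?_).trans (Finsupp.toMultiset_toFinsupp μ)
  rw [toMultiset_occurrences, Fin.univ_val_map]
  subst hlen
  simp only [Fin.cast_eq_self]
  rw [List.ofFn_get, Multiset.coe_toList]

end Occurrences

section TensorPoly

variable {d k : ℕ}

lemma tensorPoly_apply (A : (Fin k → Fin d) → ℂ) :
    tensorPoly d k A = ∑ α, A α • ∏ i, X (α i) :=
  rfl

lemma prod_X_eq_monomial_occurrences (α : Fin k → Fin d) :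
    ∏ i, (X (α i) : MvPolynomial (Fin d) ℂ) = monomial (occurrences α) 1 :=
  (monomial_sum_one _ _).symm

lemma eval_tensorPoly (A : (Fin k → Fin d) → ℂ) (ζ : Fin d → ℂ) :
    eval ζ (tensorPoly d k A) = tdot d k A (vpow d k ζ) := by
  simp [tensorPoly_apply, tdot, vpow, map_sum, map_prod]

lemma coeff_tensorPoly (A : (Fin k → Fin d) → ℂ) (μ : Fin d →₀ ℕ) :
    coeff μ (tensorPoly d k A) = ∑ β with occurrences β = μ, A β := by
  classical
  simp [tensorPoly_apply, prod_X_eq_monomial_occurrences, coeff_sum, coeff_monomial,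
    Finset.sum_filter]

lemma isHomogeneous_tensorPoly (A : (Fin k → Fin d) → ℂ) : (tensorPoly d k A).IsHomogeneous k :=
  IsHomogeneous.sum _ _ _ fun α _ => by
    change (A α • ∏ i, X (α i)).IsHomogeneous k
    rw [prod_X_eq_monomial_occurrences, smul_monomial, smul_eq_mul, mul_one]
    exact isHomogeneous_monomial _ (degree_occurrences α)

lemma tensorPoly_comp_perm (A : (Fin k → Fin d) → ℂ) (π : Equiv.Perm (Fin k)) :
    tensorPoly d k (fun α => A (α ∘ π)) = tensorPoly d k A := by
  simp only [tensorPoly_apply]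
  refine Fintype.sum_equiv (π.symm.arrowCongr (Equiv.refl _)) _ _ fun α => ?_
  simp only [Equiv.arrowCongr_apply, Equiv.symm_symm, Equiv.coe_refl, Function.id_comp]
  rw [Function.comp_def]
  congr 1
  exact (Equiv.prod_comp π fun i => X (α i)).symm

lemma tensorPoly_symmetrize (A : (Fin k → Fin d) → ℂ) :
    tensorPoly d k (symmetrize d k A) = tensorPoly d k A := by
  have hsym : symmetrize d k A =
      (k.factorial : ℂ)⁻¹ • ∑ π : Equiv.Perm (Fin k), fun α => A (α ∘ π) := by
    ext α
    simp [symmetrize]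
  rw [hsym, map_smul, map_sum, Finset.sum_congr rfl fun π _ => tensorPoly_comp_perm A π,
    Finset.sum_const, Finset.card_univ, Fintype.card_perm, Fintype.card_fin,
    ← Nat.cast_smul_eq_nsmul ℂ, smul_smul,
    inv_mul_cancel₀ (Nat.cast_ne_zero.mpr k.factorial_ne_zero), one_smul]

lemma isSymTensor_symmetrize (A : (Fin k → Fin d) → ℂ) : IsSymTensor d k (symmetrize d k A) := by
  intro π α
  simp only [symmetrize]
  congr 1
  exact Equiv.sum_comp (Equiv.mulLeft π) fun τ => A (α ∘ τ)

lemma IsSymTensor.coeff_tensorPoly {A : (Fin k → Fin d) → ℂ} (hA : IsSymTensor d k A)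
    (α : Fin k → Fin d) :
    coeff (occurrences α) (tensorPoly d k A) =
      #{β : Fin k → Fin d | occurrences β = occurrences α} * A α := by
  rw [_root_.coeff_tensorPoly, Finset.sum_congr rfl fun β hβ => ?_, Finset.sum_const,
    nsmul_eq_mul]
  obtain ⟨π, rfl⟩ := exists_perm_of_occurrences_eq (Finset.mem_filter.mp hβ).2.symm
  exact hA π α

lemma IsSymTensor.eq_of_tensorPoly_eq {A B : (Fin k → Fin d) → ℂ} (hA : IsSymTensor d k A)
    (hB : IsSymTensor d k B) (h : tensorPoly d k A = tensorPoly d k B) : A = B := by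
  funext α
  have hcoeff := congrArg (coeff (occurrences α)) h
  rw [hA.coeff_tensorPoly, hB.coeff_tensorPoly] at hcoeff
  have hα : α ∈ ({β | occurrences β = occurrences α} : Finset (Fin k → Fin d)) :=
    Finset.mem_filter.mpr ⟨mem_univ α, rfl⟩
  exact mul_left_cancel₀ (Nat.cast_ne_zero.mpr (Finset.card_ne_zero_of_mem hα)) hcoeff

lemma exists_tensorPoly_eq {R : MvPolynomial (Fin d) ℂ} (hR : R.IsHomogeneous k) :
    ∃ S : (Fin k → Fin d) → ℂ, tensorPoly d k S = R := by
  suffices homogeneousSubmodule (Fin d) ℂ k ≤ LinearMap.range (tensorPoly d k) from this hR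
  rw [homogeneousSubmodule_eq_finsupp_supported, ← restrictSupport, restrictSupport_eq_span,
    tensorPoly, Fintype.range_linearCombination]
  refine Submodule.span_mono ?_
  rintro _ ⟨μ, hμ, rfl⟩
  obtain ⟨β, rfl⟩ := exists_occurrences_eq hμ
  exact ⟨β, prod_X_eq_monomial_occurrences β⟩

end TensorPoly

section Products

variable {d : ℕ}

lemma isSymTensor_tcast {a b : ℕ} (h : a = b) {A : (Fin a → Fin d) → ℂ}
    (hA : IsSymTensor d a A) : IsSymTensor d b (tcast d h A) := by
  subst h
  exact hA

lemma tensorPoly_tcast {a b : ℕ} (h : a = b) (A : (Fin a → Fin d) → ℂ) :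
    tensorPoly d b (tcast d h A) = tensorPoly d a A := by
  subst h
  rfl

lemma tensorPoly_stprod {j k : ℕ} (A : (Fin j → Fin d) → ℂ) (B : (Fin k → Fin d) → ℂ) :
    tensorPoly d (j + k) (stprod d j k A B) = tensorPoly d j A * tensorPoly d k B := by
  rw [stprod, tensorPoly_symmetrize, tensorPoly_apply, tensorPoly_apply, tensorPoly_apply,
    Finset.sum_mul_sum, ← Fintype.sum_prod_type']
  refine Fintype.sum_equiv (Fin.appendEquiv j k).symm _ _ fun α => ?_
  rw [Fin.prod_univ_add, Fin.appendEquiv_symm_apply, smul_mul_smul_comm]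

lemma tensorPoly_I2 : tensorPoly d 2 (I2 d) = ∑ i, X i ^ 2 := by
  rw [tensorPoly_apply, ← (piFinTwoEquiv fun _ => Fin d).symm.sum_comp, Fintype.sum_prod_type]
  simp [I2, Fin.prod_univ_two, sq]

end Products

section Cone

variable {d : ℕ}

lemma sum_re_mul_im_eq_zero_of_sum_sq_eq_zero {ζ : Fin d → ℂ} (hζ : ∑ j, ζ j ^ 2 = 0) :
    ∑ j, (ζ j).re * (ζ j).im = 0 := by
  have := congrArg Complex.im hζ
  simp only [Complex.im_sum, sq, Complex.mul_im, Complex.zero_im, mul_comm (ζ _).im, ← two_mul,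
    ← Finset.mul_sum] at this
  simpa using this

lemma sum_re_sq_eq_sum_im_sq_of_sum_sq_eq_zero {ζ : Fin d → ℂ} (hζ : ∑ j, ζ j ^ 2 = 0) :
    ∑ j, (ζ j).re ^ 2 = ∑ j, (ζ j).im ^ 2 := by
  have := congrArg Complex.re hζ
  simp only [Complex.re_sum, sq, Complex.mul_re, Complex.zero_re, Finset.sum_sub_distrib,
    sub_eq_zero] at this
  simpa only [sq] using this

lemma exists_memV_of_sum_sq_eq_zero {ζ : Fin d → ℂ} (hζ : ∑ j, ζ j ^ 2 = 0) (hζ0 : ζ ≠ 0) :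
    ∃ (t : ℝ) (η : Fin d → ℂ), memV d η ∧ ζ = (t : ℂ) • η := by
  have hre := sum_re_sq_eq_sum_im_sq_of_sum_sq_eq_zero hζ
  set S := ∑ j, (ζ j).re ^ 2
  have hS : 0 < S := by
    refine lt_of_le_of_ne (by positivity) fun hS0 => hζ0 (funext fun j => Complex.ext ?_ ?_)
    · have hx := (Fintype.sum_eq_zero_iff_of_nonneg fun j => sq_nonneg (ζ j).re).mp hS0.symm
      exact pow_eq_zero_iff two_ne_zero |>.mp (congrFun hx j)
    · have hy :=
        (Fintype.sum_eq_zero_iff_of_nonneg fun j => sq_nonneg (ζ j).im).mp (hre ▸ hS0).symm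
      exact pow_eq_zero_iff two_ne_zero |>.mp (congrFun hy j)
  set t := Real.sqrt S
  have ht : t ≠ 0 := Real.sqrt_ne_zero'.mpr hS
  have ht2 : t⁻¹ ^ 2 * S = 1 := by
    rw [inv_pow, Real.sq_sqrt hS.le, inv_mul_cancel₀ hS.ne']
  refine ⟨t, ((t⁻¹ : ℝ) : ℂ) • ζ, ⟨?_, ?_, ?_⟩,
    by rw [smul_smul, ← Complex.ofReal_mul, mul_inv_cancel₀ ht, Complex.ofReal_one, one_smul]⟩ <;>
    simp only [Pi.smul_apply, smul_eq_mul, Complex.re_ofReal_mul, Complex.im_ofReal_mul]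
  · rw [← mul_zero (t⁻¹ * t⁻¹), ← sum_re_mul_im_eq_zero_of_sum_sq_eq_zero hζ, Finset.mul_sum]
    exact Finset.sum_congr rfl fun j _ => by ring
  · simpa only [mul_pow, ← Finset.mul_sum] using ht2
  · simpa only [mul_pow, ← Finset.mul_sum, ← hre] using ht2

lemma tdot_vpow_smul {k : ℕ} (A : (Fin k → Fin d) → ℂ) (c : ℂ) (v : Fin d → ℂ) :
    tdot d k A (vpow d k (c • v)) = c ^ k * tdot d k A (vpow d k v) := by
  simp only [tdot, vpow, Pi.smul_apply, smul_eq_mul, Finset.prod_mul_distrib, Finset.prod_const,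
    Finset.card_univ, Fintype.card_fin, Finset.mul_sum]
  exact Finset.sum_congr rfl fun α _ => by ring

lemma tdot_vpow_eq_zero_of_sum_sq_eq_zero {k : ℕ} (hk : k ≠ 0) {A : (Fin k → Fin d) → ℂ}
    (hA : ∀ η, memV d η → tdot d k A (vpow d k η) = 0) {ζ : Fin d → ℂ}
    (hζ : ∑ j, ζ j ^ 2 = 0) : tdot d k A (vpow d k ζ) = 0 := by
  by_cases hζ0 : ζ = 0
  · rw [hζ0, ← zero_smul ℂ ζ, tdot_vpow_smul, zero_pow hk, zero_mul]
  · obtain ⟨t, η, hη, rfl⟩ := exists_memV_of_sum_sq_eq_zero hζ hζ0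
    rw [tdot_vpow_smul, hA η hη, mul_zero]

end Cone

section Quadric

lemma eq_zero_of_eval_mul_add_eq_zero {σ : Type*} {a b c : MvPolynomial σ ℂ}
    (hc : c ≠ 0) (h : ∀ x s, s ^ 2 + MvPolynomial.eval x c = 0 →
      MvPolynomial.eval x a * s + MvPolynomial.eval x b = 0) : a = 0 ∧ b = 0 := by
  have hroots : ∀ x, MvPolynomial.eval x a * MvPolynomial.eval x c = 0 ∧
      MvPolynomial.eval x b = 0 := by
    intro x
    obtain ⟨s, hs⟩ := IsAlgClosed.exists_pow_nat_eq (-MvPolynomial.eval x c) two_pos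
    have hplus := h x s (by rw [hs]; ring)
    have hminus := h x (-s) (by rw [neg_sq, hs]; ring)
    constructor
    · linear_combination (-(s / 2)) * (hplus - hminus) + MvPolynomial.eval x a * hs
    · linear_combination (hplus + hminus) / 2
  have hac : a * c = 0 := MvPolynomial.funext fun x => by simpa using (hroots x).1
  exact ⟨(mul_eq_zero.mp hac).resolve_right hc,
    MvPolynomial.funext fun x => by simpa using (hroots x).2⟩

lemma X_sq_add_C_dvd_of_eval_eq_zero {σ : Type*} {c : MvPolynomial σ ℂ} (hc : c ≠ 0)
    {P : Polynomial (MvPolynomial σ ℂ)}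
    (h : ∀ x s, s ^ 2 + MvPolynomial.eval x c = 0 → (P.map (MvPolynomial.eval x)).eval s = 0) :
    Polynomial.X ^ 2 + Polynomial.C c ∣ P := by
  set q : Polynomial (MvPolynomial σ ℂ) := Polynomial.X ^ 2 + Polynomial.C c
  have hq : q.Monic := Polynomial.monic_X_pow_add_C c two_ne_zero
  set r := P %ₘ q
  have hr : r = Polynomial.C (r.coeff 1) * Polynomial.X + Polynomial.C (r.coeff 0) := by
    refine Polynomial.eq_X_add_C_of_natDegree_le_one (Nat.le_of_lt_succ ?_)
    simpa [q] using Polynomial.natDegree_modByMonic_lt P hq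
      fun h1 => by simpa [q] using congrArg Polynomial.natDegree h1
  have hr_eval : ∀ x s, s ^ 2 + MvPolynomial.eval x c = 0 →
      MvPolynomial.eval x (r.coeff 1) * s + MvPolynomial.eval x (r.coeff 0) = 0 := by
    intro x s hs
    have hP : ((r + q * (P /ₘ q)).map (MvPolynomial.eval x)).eval s = 0 := by
      rw [Polynomial.modByMonic_add_div P q]
      exact h x s hs
    rw [hr] at hP
    simpa [q, hs] using hP
  obtain ⟨ha, hb⟩ := eq_zero_of_eval_mul_add_eq_zero hc hr_eval
  rw [← Polynomial.modByMonic_eq_zero_iff_dvd hq]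
  change r = 0
  rw [hr, ha, hb]
  simp

lemma sum_X_sq_dvd_of_eval_eq_zero {d : ℕ} (hd : 2 ≤ d) {P : MvPolynomial (Fin d) ℂ}
    (h : ∀ ζ : Fin d → ℂ, ∑ j, ζ j ^ 2 = 0 → eval ζ P = 0) : ∑ j, X j ^ 2 ∣ P := by
  obtain ⟨n, rfl⟩ : ∃ n, d = n + 1 := ⟨d - 1, by omega⟩
  set c : MvPolynomial (Fin n) ℂ := ∑ j, X j ^ 2
  have hc : c ≠ 0 := fun h0 => by
    have := congrArg (eval fun _ => (1 : ℂ)) h0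
    simp [c] at this
    omega
  have hq : finSuccEquiv ℂ n (∑ j, X j ^ 2) = Polynomial.X ^ 2 + Polynomial.C c := by
    simp [Fin.sum_univ_succ, finSuccEquiv_X_zero, finSuccEquiv_X_succ, c, map_sum]
  rw [← map_dvd_iff (finSuccEquiv ℂ n), hq]
  refine X_sq_add_C_dvd_of_eval_eq_zero hc fun x s hs => ?_
  rw [← eval_eq_eval_mv_eval']
  refine h _ ?_
  simpa [Fin.sum_univ_succ, c] using hs

end Quadric

lemma homogeneousComponent_add_mul {σ R : Type*} [CommSemiring R] {q : MvPolynomial σ R}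
    {m : ℕ} (hq : q.IsHomogeneous m) (p : MvPolynomial σ R) (n : ℕ) :
    homogeneousComponent (m + n) (q * p) = q * homogeneousComponent n p := by
  have hcomp : ∀ i, homogeneousComponent (m + n) (q * homogeneousComponent i p) =
      if m + n = m + i then q * homogeneousComponent i p else 0 := fun i =>
    homogeneousComponent_of_mem (hq.mul (homogeneousComponent_isHomogeneous i p))
  conv_lhs => rw [← sum_homogeneousComponent p, Finset.mul_sum, map_sum]
  simp only [hcomp, add_right_inj, Finset.sum_ite_eq, Finset.mem_range]
  split_ifs with hn
  · rfl
  · rw [homogeneousComponent_eq_zero _ _ (by omega), mul_zero]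

/-- a symmetric k-tensor (k ≥ 2, d ≥ 3) with A · ζ^k = 0 for all
ζ ∈ V has the form A = I₂ ⊗ B with B symmetric of order k - 2. -/
theorem tensor_vanishing_on_V (d k : ℕ) (hk : 2 ≤ k) (hd : 3 ≤ d)
    (A : (Fin k → Fin d) → ℂ) (hA : IsSymTensor d k A)
    (h : ∀ ζ : Fin d → ℂ, memV d ζ → tdot d k A (vpow d k ζ) = 0) :
    ∃ B : (Fin (k - 2) → Fin d) → ℂ, IsSymTensor d (k - 2) B ∧
      A = tcast d (by omega : 2 + (k - 2) = k) (stprod d 2 (k - 2) (I2 d) B) := by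
  have hk' : 2 + (k - 2) = k := by omega
  obtain ⟨R, hR⟩ : ∑ j, X j ^ 2 ∣ tensorPoly d k A :=
    sum_X_sq_dvd_of_eval_eq_zero (by omega) fun ζ hζ => by
      rw [eval_tensorPoly]
      exact tdot_vpow_eq_zero_of_sum_sq_eq_zero (by omega) h hζ
  have hqhom : (∑ j, X j ^ 2 : MvPolynomial (Fin d) ℂ).IsHomogeneous 2 :=
    IsHomogeneous.sum _ _ _ fun j _ => isHomogeneous_X_pow j 2
  obtain ⟨S, hS⟩ := exists_tensorPoly_eq (homogeneousComponent_isHomogeneous (k - 2) R)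
  refine ⟨symmetrize d (k - 2) S, isSymTensor_symmetrize S,
    hA.eq_of_tensorPoly_eq (isSymTensor_tcast _ (isSymTensor_symmetrize _)) ?_⟩
  rw [tensorPoly_tcast, tensorPoly_stprod, tensorPoly_I2, tensorPoly_symmetrize, hS,
    ← homogeneousComponent_add_mul hqhom, ← hR, hk',
    homogeneousComponent_eq_self (isHomogeneous_tensorPoly A)]
end
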